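/- Let E = [−1,1]³, T > 0, and let J, vⁱ, Ãⁱ (symmetric), q be as in the energy identity setting: continuously differentiable on E × [0,T], 𝒜ⁱ = Ãⁱ − vⁱ·Id, GCL ∂J/∂τ = Σᵢ ∂vⁱ/∂ξⁱ, with q solving ∂(Jq)/∂τ + Σᵢ ∂(𝒜ⁱ q)/∂ξⁱ = 0 on E × [0,T]. Assume moreover: (a) J(ξ,τ) > 0 on E × [0,T]; (b) there is γ ≥ 0 with ‖Σᵢ₌₁³ ∂Ãⁱ/∂ξⁱ (ξ,τ)‖ ≤ 2γ J(ξ,τ) for all (ξ,τ) (operator norm); and (c) the outward boundary flux is nonnegative: for each i and all τ, qᵀ𝒜ⁱq ≥ 0 on the face ξⁱ = 1 and qᵀ𝒜ⁱq ≤ 0 on the face ξⁱ = −1. Then the weighted energy satisfies ∫_E J(ξ,T) ‖q(ξ,T)‖² dξ ≤ e^{2γT} ∫_E J(ξ,0) ‖q(ξ,0)‖² dξ, i.e. ‖q(T)‖_J ≤ e^{γT} ‖q(0)‖_J. -/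

import Mathlib

open Matrix MeasureTheory

/-!
Multiplying the conservative system by `q` and using the symmetry of `Ãⁱ` gives, pointwise,
`∂τ (J |q|²) = -Σᵢ ∂ᵢ (qᵀ𝒜ⁱq) - qᵀ (Σᵢ ∂ᵢ𝒜ⁱ) q - (∂τ J) |q|²`; the GCL turns
`Σᵢ ∂ᵢ𝒜ⁱ = Σᵢ ∂ᵢÃⁱ - (Σᵢ ∂ᵢvⁱ) Id` into `DA - (∂τ J) Id`, leaving
`∂τ (J |q|²) = -Σᵢ ∂ᵢ (qᵀ𝒜ⁱq) - qᵀ DA q`. Integrated over the cube, the divergence theorem turns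
the first term into boundary fluxes, nonpositive by the sign conditions, and the operator-norm
bound gives `-qᵀ DA q ≤ 2γ J |q|²`. Hence the energy `F τ = ∫ J |q|²` satisfies
`F' ≤ 2γ F`, and Grönwall's inequality gives `F T ≤ e^{2γT} F 0`.
-/

section VectorCalculus

variable {X : Type*} [NormedAddCommGroup X] [NormedSpace ℝ X] {n : Type*} {p : X}

noncomputable def matrixFDeriv {m : Type*} (M : X → Matrix m n ℝ) (p w : X) : Matrix m n ℝ :=
  Matrix.of fun a b => fderiv ℝ (fun x => M x a b) p w

theorem matrixFDeriv_sub_smul_one [DecidableEq n] {A : X → Matrix n n ℝ} {c : X → ℝ}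
    (hA : ∀ a b, DifferentiableAt ℝ (fun x => A x a b) p) (hc : DifferentiableAt ℝ c p) (w : X) :
    matrixFDeriv (fun x => A x - c x • 1) p w = matrixFDeriv A p w - fderiv ℝ c p w • 1 := by
  ext a b
  by_cases hab : a = b <;>
    simp [matrixFDeriv, hab, fderiv_fun_sub (hA _ _) hc]

variable [Fintype n]

theorem fderiv_apply_apply {q : X → n → ℝ} (hq : DifferentiableAt ℝ q p) (a : n) (w : X) :
    fderiv ℝ (fun x => q x a) p w = fderiv ℝ q p w a := by
  have h : HasFDerivAt (fun x => q x a) ((ContinuousLinearMap.proj a).comp (fderiv ℝ q p)) p :=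
    (hasFDerivAt_apply (𝕜 := ℝ) (F' := fun _ : n => ℝ) a (q p)).comp p hq.hasFDerivAt
  rw [h.fderiv]
  rfl

theorem DifferentiableAt.dotProduct {q r : X → n → ℝ} (hq : DifferentiableAt ℝ q p)
    (hr : DifferentiableAt ℝ r p) : DifferentiableAt ℝ (fun x => q x ⬝ᵥ r x) p :=
  DifferentiableAt.fun_sum fun a _ =>
    (differentiableAt_pi.1 hq a).fun_mul (differentiableAt_pi.1 hr a)

theorem DifferentiableAt.mulVec {m : Type*} [Fintype m] {M : X → Matrix m n ℝ}
    {r : X → n → ℝ} (hM : ∀ a b, DifferentiableAt ℝ (fun x => M x a b) p)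
    (hr : DifferentiableAt ℝ r p) : DifferentiableAt ℝ (fun x => M x *ᵥ r x) p :=
  differentiableAt_pi.2 fun a => (differentiableAt_pi.2 (hM a)).dotProduct hr

theorem ContDiff.dotProduct {k : WithTop ℕ∞} {q r : X → n → ℝ} (hq : ContDiff ℝ k q)
    (hr : ContDiff ℝ k r) : ContDiff ℝ k fun x => q x ⬝ᵥ r x :=
  ContDiff.sum fun a _ => (contDiff_pi.1 hq a).mul (contDiff_pi.1 hr a)

theorem ContDiff.mulVec {k : WithTop ℕ∞} {m : Type*} [Fintype m] {M : X → Matrix m n ℝ}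
    {r : X → n → ℝ} (hM : ∀ a b, ContDiff ℝ k fun x => M x a b) (hr : ContDiff ℝ k r) :
    ContDiff ℝ k fun x => M x *ᵥ r x :=
  contDiff_pi.2 fun a => (contDiff_pi.2 (hM a)).dotProduct hr

theorem fderiv_dotProduct_apply {q r : X → n → ℝ} (hq : DifferentiableAt ℝ q p)
    (hr : DifferentiableAt ℝ r p) (w : X) :
    fderiv ℝ (fun x => q x ⬝ᵥ r x) p w = fderiv ℝ q p w ⬝ᵥ r p + q p ⬝ᵥ fderiv ℝ r p w := by
  have hqa a := differentiableAt_pi.1 hq a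
  have hra a := differentiableAt_pi.1 hr a
  simp only [dotProduct, fderiv_fun_sum fun a _ => (hqa a).fun_mul (hra a), _root_.sum_apply,
    fderiv_fun_mul (hqa _) (hra _), _root_.add_apply, _root_.smul_apply, smul_eq_mul,
    fderiv_apply_apply hq, fderiv_apply_apply hr, ← Finset.sum_add_distrib]
  exact Finset.sum_congr rfl fun a _ => by ring

theorem fderiv_mulVec_apply {m : Type*} [Fintype m] {M : X → Matrix m n ℝ} {r : X → n → ℝ}
    (hM : ∀ a b, DifferentiableAt ℝ (fun x => M x a b) p) (hr : DifferentiableAt ℝ r p) (w : X) :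
    fderiv ℝ (fun x => M x *ᵥ r x) p w = matrixFDeriv M p w *ᵥ r p + M p *ᵥ fderiv ℝ r p w := by
  have hra a := differentiableAt_pi.1 hr a
  ext a
  rw [← fderiv_apply_apply (DifferentiableAt.mulVec hM hr)]
  simp only [mulVec, dotProduct, fderiv_fun_sum fun b _ => (hM a b).fun_mul (hra b),
    _root_.sum_apply, fderiv_fun_mul (hM a _) (hra _), _root_.add_apply, _root_.smul_apply,
    smul_eq_mul, fderiv_apply_apply hr, Pi.add_apply, ← Finset.sum_add_distrib, matrixFDeriv,
    of_apply]
  exact Finset.sum_congr rfl fun b _ => by ring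

end VectorCalculus

theorem Matrix.IsSymm.dotProduct_mulVec_comm {n : Type*} [Fintype n] {A : Matrix n n ℝ}
    (hA : A.IsSymm) (x y : n → ℝ) : x ⬝ᵥ (A *ᵥ y) = y ⬝ᵥ (A *ᵥ x) := by
  rw [dotProduct_mulVec, ← mulVec_transpose, hA.eq, dotProduct_comm]

theorem Matrix.abs_dotProduct_mulVec_le {n : Type*} [Fintype n] [DecidableEq n]
    (M : Matrix n n ℝ) (x : n → ℝ) :
    |x ⬝ᵥ (M *ᵥ x)| ≤ ‖Matrix.toEuclideanCLM (𝕜 := ℝ) M‖ * (x ⬝ᵥ x) := by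
  set y : EuclideanSpace ℝ n := WithLp.toLp 2 x
  have hquad : x ⬝ᵥ (M *ᵥ x) = inner ℝ y (Matrix.toEuclideanCLM (𝕜 := ℝ) M y) := by
    simp [y, PiLp.inner_apply, dotProduct, mul_comm]
  have hnorm : x ⬝ᵥ x = ‖y‖ ^ 2 := by
    rw [EuclideanSpace.norm_sq_eq]
    simp [y, dotProduct, sq]
  rw [hquad, hnorm, sq, ← mul_assoc]
  exact (abs_real_inner_le_norm _ _).trans <| by
    rw [mul_comm ‖y‖]
    exact mul_le_mul_of_nonneg_right ((Matrix.toEuclideanCLM (𝕜 := ℝ) M).le_opNorm y)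
      (norm_nonneg y)

section EnergyIdentity

variable {X : Type*} [NormedAddCommGroup X] [NormedSpace ℝ X] {n ι : Type*} [Fintype n]
  [DecidableEq n] [Fintype ι] {p : X}

/-- `t` is the time direction and `e i` the `i`-th spatial direction; `hdiv` is the form in which
the GCL enters. -/
theorem fderiv_energy_density_apply {J : X → ℝ} {q : X → n → ℝ} {𝒜 : ι → X → Matrix n n ℝ}
    {t : X} {e : ι → X} {D : Matrix n n ℝ} (hJ : DifferentiableAt ℝ J p)
    (hq : DifferentiableAt ℝ q p) (h𝒜 : ∀ i a b, DifferentiableAt ℝ (fun x => 𝒜 i x a b) p)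
    (hsymm : ∀ i, (𝒜 i p).IsSymm)
    (hdiv : ∑ i, matrixFDeriv (𝒜 i) p (e i) = D - fderiv ℝ J p t • 1)
    (hPDE : fderiv ℝ (fun x => J x • q x) p t
      + ∑ i, fderiv ℝ (fun x => 𝒜 i x *ᵥ q x) p (e i) = 0) :
    fderiv ℝ (fun x => J x * (q x ⬝ᵥ q x)) p t
      = -∑ i, fderiv ℝ (fun x => q x ⬝ᵥ (𝒜 i x *ᵥ q x)) p (e i) - q p ⬝ᵥ (D *ᵥ q p) := by
  -- symmetry of `𝒜 i` is what lets `∂ᵢ(qᵀ𝒜ⁱq)` contain `qᵀ𝒜ⁱ∂ᵢq` twice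
  have hflux i : fderiv ℝ (fun x => q x ⬝ᵥ (𝒜 i x *ᵥ q x)) p (e i)
      = q p ⬝ᵥ (𝒜 i p *ᵥ fderiv ℝ q p (e i))
        + (q p ⬝ᵥ (matrixFDeriv (𝒜 i) p (e i) *ᵥ q p) + q p ⬝ᵥ (𝒜 i p *ᵥ fderiv ℝ q p (e i))) := by
    rw [fderiv_dotProduct_apply hq (DifferentiableAt.mulVec (h𝒜 i) hq),
      fderiv_mulVec_apply (h𝒜 i) hq, (hsymm i).dotProduct_mulVec_comm, dotProduct_add]
  have hPDE_q := congrArg (q p ⬝ᵥ ·) hPDE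
  have hdiv_q := congrArg (fun M => q p ⬝ᵥ (M *ᵥ q p)) hdiv
  simp only [fderiv_fun_smul hJ hq, fderiv_mulVec_apply (h𝒜 _) hq, _root_.add_apply,
    _root_.smul_apply, ContinuousLinearMap.smulRight_apply, dotProduct_add, dotProduct_smul,
    dotProduct_sum, smul_eq_mul, dotProduct_zero, Finset.sum_add_distrib] at hPDE_q
  simp only [sum_mulVec, dotProduct_sum, sub_mulVec, smul_mulVec, one_mulVec, dotProduct_sub,
    dotProduct_smul, smul_eq_mul] at hdiv_q
  simp only [fderiv_fun_mul hJ (hq.dotProduct hq), _root_.add_apply, _root_.smul_apply,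
    smul_eq_mul, fderiv_dotProduct_apply hq hq, dotProduct_comm (fderiv ℝ q p t), hflux,
    Finset.sum_add_distrib]
  linear_combination 2 * hPDE_q - hdiv_q

theorem fderiv_energy_density_le {J : X → ℝ} {v : ι → X → ℝ} {At 𝒜 : ι → X → Matrix n n ℝ}
    {q : X → n → ℝ} {D : Matrix n n ℝ} {t : X} {e : ι → X} {γ : ℝ}
    (hJ : DifferentiableAt ℝ J p) (hv : ∀ i, DifferentiableAt ℝ (v i) p)
    (hAt : ∀ i a b, DifferentiableAt ℝ (fun x => At i x a b) p) (hq : DifferentiableAt ℝ q p)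
    (h𝒜 : 𝒜 = fun i x => At i x - v i x • 1) (hsymm : ∀ i, (At i p).IsSymm)
    (hGCL : fderiv ℝ J p t = ∑ i, fderiv ℝ (v i) p (e i))
    (hPDE : fderiv ℝ (fun x => J x • q x) p t
      + ∑ i, fderiv ℝ (fun x => 𝒜 i x *ᵥ q x) p (e i) = 0)
    (hD : D = ∑ i, matrixFDeriv (At i) p (e i))
    (hD_norm : ‖Matrix.toEuclideanCLM (𝕜 := ℝ) D‖ ≤ 2 * γ * J p) :
    fderiv ℝ (fun x => J x * (q x ⬝ᵥ q x)) p t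
      ≤ -∑ i, fderiv ℝ (fun x => q x ⬝ᵥ (𝒜 i x *ᵥ q x)) p (e i)
        + 2 * γ * (J p * (q p ⬝ᵥ q p)) := by
  subst h𝒜
  have h𝒜 i a b : DifferentiableAt ℝ (fun x => (At i x - v i x • 1) a b) p := by
    simpa [one_apply] using (hAt i a b).fun_sub ((hv i).mul_const ((1 : Matrix n n ℝ) a b))
  have hdiv : ∑ i, matrixFDeriv (fun x => At i x - v i x • 1) p (e i)
      = D - fderiv ℝ J p t • 1 := by
    simp only [matrixFDeriv_sub_smul_one (hAt _) (hv _), Finset.sum_sub_distrib,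
      ← Finset.sum_smul, hGCL, hD]
  rw [fderiv_energy_density_apply hJ hq h𝒜 (fun i => (hsymm i).sub (isSymm_one.smul _)) hdiv
    hPDE, sub_eq_add_neg]
  gcongr
  calc -(q p ⬝ᵥ (D *ᵥ q p)) ≤ ‖Matrix.toEuclideanCLM (𝕜 := ℝ) D‖ * (q p ⬝ᵥ q p) :=
        (neg_le_abs _).trans (D.abs_dotProduct_mulVec_le (q p))
    _ ≤ 2 * γ * J p * (q p ⬝ᵥ q p) := by
        gcongr
        simpa using dotProduct_self_star_nonneg (q p)
    _ = 2 * γ * (J p * (q p ⬝ᵥ q p)) := mul_assoc _ _ _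

end EnergyIdentity

section Slices

variable {X E : Type*} [NormedAddCommGroup X] [NormedSpace ℝ X] [NormedAddCommGroup E]
  [NormedSpace ℝ E]

theorem fderiv_comp_prodMk_left_apply {g : X × ℝ → E} {x : X} {τ : ℝ}
    (hg : DifferentiableAt ℝ g (x, τ)) (w : X) :
    fderiv ℝ (fun y => g (y, τ)) x w = fderiv ℝ g (x, τ) (w, 0) := by
  have h : HasFDerivAt (fun y => g (y, τ)) ((fderiv ℝ g (x, τ)).comp (.inl ℝ X ℝ)) x :=
    hg.hasFDerivAt.comp x (hasFDerivAt_prodMk_left x τ)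
  rw [h.fderiv]
  rfl

theorem hasDerivAt_comp_prodMk_right {g : X × ℝ → E} {x : X} {τ : ℝ}
    (hg : DifferentiableAt ℝ g (x, τ)) :
    HasDerivAt (fun t => g (x, t)) (fderiv ℝ g (x, τ) (0, 1)) τ :=
  hg.hasFDerivAt.comp_hasDerivAt τ ((hasDerivAt_const τ x).prodMk (hasDerivAt_id τ))

theorem hasDerivAt_setIntegral_of_contDiff [MeasurableSpace X] [BorelSpace X]
    [SecondCountableTopology X] {μ : Measure X} [IsFiniteMeasureOnCompacts μ] {K : Set X}
    (hK : IsCompact K) {g : X × ℝ → E} (hg : ContDiff ℝ 1 g) (τ : ℝ) :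
    HasDerivAt (fun t => ∫ x in K, g (x, t) ∂μ) (∫ x in K, fderiv ℝ g (x, τ) (0, 1) ∂μ) τ := by
  have hslice {f : X × ℝ → E} (hf : Continuous f) (t : ℝ) : Continuous fun x => f (x, t) :=
    hf.comp (continuous_id.prodMk continuous_const)
  have hg' : Continuous fun y => fderiv ℝ g y (0, 1) :=
    (hg.continuous_fderiv one_ne_zero).clm_apply continuous_const
  obtain ⟨C, hC⟩ : ∃ C, ∀ y ∈ K ×ˢ Set.Icc (τ - 1) (τ + 1), ‖fderiv ℝ g y (0, 1)‖ ≤ C :=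
    (hK.prod isCompact_Icc).exists_bound_of_continuousOn hg'.continuousOn
  refine (hasDerivAt_integral_of_dominated_loc_of_deriv_le (bound := fun _ => C)
    (Metric.ball_mem_nhds τ one_pos)
    (.of_forall fun t => (hslice hg.continuous t).aestronglyMeasurable)
    ((hslice hg.continuous τ).continuousOn.integrableOn_compact hK)
    (hslice hg' τ).aestronglyMeasurable ?_ (integrableOn_const hK.measure_lt_top.ne)
    (.of_forall fun x t _ =>
      hasDerivAt_comp_prodMk_right ((hg.differentiable one_ne_zero) (x, t)))).2
  refine (ae_restrict_iff' hK.measurableSet).2 (.of_forall fun x hx t ht => hC (x, t) ⟨hx, ?_⟩)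
  rw [Metric.mem_ball, Real.dist_eq, abs_lt] at ht
  constructor <;> linarith [ht.1, ht.2]

end Slices

theorem integral_divergence_nonneg_of_flux_nonneg {n : ℕ} {a b : Fin (n + 1) → ℝ} (hab : a ≤ b)
    {f : Fin (n + 1) → (Fin (n + 1) → ℝ) → ℝ} (hf : ∀ i, ContDiff ℝ 1 (f i))
    (hflux : ∀ i, ∀ x ∈ Set.Icc a b, (x i = b i → 0 ≤ f i x) ∧ (x i = a i → f i x ≤ 0)) :
    0 ≤ ∫ x in Set.Icc a b, ∑ i, fderiv ℝ (f i) x (Pi.single i 1) := by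
  rw [integral_divergence_of_hasFDerivAt_off_countable' a b hab f (fun i => fderiv ℝ (f i)) ∅
    Set.countable_empty (fun i => (hf i).continuous.continuousOn)
    (fun x _ i => ((hf i).differentiable one_ne_zero x).hasFDerivAt)
    (continuous_finsetSum _ fun i _ =>
      ((hf i).continuous_fderiv one_ne_zero).clm_apply continuous_const).integrableOn_Icc]
  refine Finset.sum_nonneg fun i _ => sub_nonneg.2 ?_
  have hface {c : ℝ} (hc : c ∈ Set.Icc (a i) (b i)) {x}
      (hx : x ∈ Set.Icc (a ∘ i.succAbove) (b ∘ i.succAbove)) : i.insertNth c x ∈ Set.Icc a b :=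
    Fin.insertNth_mem_Icc.2 ⟨hc, hx⟩
  calc (∫ x in Set.Icc (a ∘ i.succAbove) (b ∘ i.succAbove), f i (i.insertNth (a i) x))
      ≤ 0 := setIntegral_nonpos measurableSet_Icc fun x hx =>
        (hflux i _ (hface ⟨le_rfl, hab i⟩ hx)).2 (Fin.insertNth_apply_same _ _ _)
    _ ≤ ∫ x in Set.Icc (a ∘ i.succAbove) (b ∘ i.succAbove), f i (i.insertNth (b i) x) :=
      setIntegral_nonneg measurableSet_Icc fun x hx =>
        (hflux i _ (hface ⟨hab i, le_rfl⟩ hx)).1 (Fin.insertNth_apply_same _ _ _)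

theorem setIntegral_fderiv_le_mul_of_flux_nonneg {n : ℕ} {a b : Fin (n + 1) → ℝ} (hab : a ≤ b)
    {g : (Fin (n + 1) → ℝ) × ℝ → ℝ} {Φ : Fin (n + 1) → (Fin (n + 1) → ℝ) × ℝ → ℝ}
    (hg : ContDiff ℝ 1 g) (hΦ : ∀ i, ContDiff ℝ 1 (Φ i)) {K τ : ℝ}
    (hrate : ∀ ξ ∈ Set.Icc a b, fderiv ℝ g (ξ, τ) (0, 1)
      ≤ -∑ i, fderiv ℝ (Φ i) (ξ, τ) (Pi.single i 1, 0) + K * g (ξ, τ))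
    (hflux : ∀ i, ∀ ξ ∈ Set.Icc a b,
      (ξ i = b i → 0 ≤ Φ i (ξ, τ)) ∧ (ξ i = a i → Φ i (ξ, τ) ≤ 0)) :
    ∫ ξ in Set.Icc a b, fderiv ℝ g (ξ, τ) (0, 1) ≤ K * ∫ ξ in Set.Icc a b, g (ξ, τ) := by
  have hslice : ContDiff ℝ 1 fun ξ : Fin (n + 1) → ℝ => (ξ, τ) :=
    contDiff_id.prodMk contDiff_const
  have hdiv := integral_divergence_nonneg_of_flux_nonneg hab (fun i => (hΦ i).comp hslice) hflux
  simp only [Function.comp_def,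
    fderiv_comp_prodMk_left_apply ((hΦ _).differentiable one_ne_zero _)] at hdiv
  have hcont_div : Continuous fun ξ => ∑ i, fderiv ℝ (Φ i) (ξ, τ) (Pi.single i 1, 0) :=
    continuous_finsetSum _ fun i _ =>
      (((hΦ i).continuous_fderiv one_ne_zero).comp hslice.continuous).clm_apply continuous_const
  have hcont_g : Continuous fun ξ => g (ξ, τ) := hg.continuous.comp hslice.continuous
  calc ∫ ξ in Set.Icc a b, fderiv ℝ g (ξ, τ) (0, 1)
      ≤ ∫ ξ in Set.Icc a b, (-∑ i, fderiv ℝ (Φ i) (ξ, τ) (Pi.single i 1, 0) + K * g (ξ, τ)) :=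
        setIntegral_mono_on
          ((((hg.continuous_fderiv one_ne_zero).comp hslice.continuous).clm_apply
            continuous_const).integrableOn_Icc)
          ((hcont_div.fun_neg.add (continuous_const.mul hcont_g)).integrableOn_Icc)
          measurableSet_Icc hrate
    _ = -(∫ ξ in Set.Icc a b, ∑ i, fderiv ℝ (Φ i) (ξ, τ) (Pi.single i 1, 0))
          + K * ∫ ξ in Set.Icc a b, g (ξ, τ) := by
        rw [integral_add hcont_div.fun_neg.integrableOn_Icc
          (hcont_g.integrableOn_Icc.const_mul K), integral_neg, integral_const_mul]
    _ ≤ K * ∫ ξ in Set.Icc a b, g (ξ, τ) := by linarith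

theorem le_exp_mul_of_deriv_le_mul {F F' : ℝ → ℝ} {K a b : ℝ} (hab : a ≤ b)
    (hF : ContinuousOn F (Set.Icc a b))
    (hF' : ∀ t ∈ Set.Ico a b, HasDerivWithinAt F (F' t) (Set.Ici t) t)
    (hbound : ∀ t ∈ Set.Ico a b, F' t ≤ K * F t) :
    F b ≤ Real.exp (K * (b - a)) * F a := by
  have := le_gronwallBound_of_liminf_deriv_right_le hF
    (fun t ht _ hr => (hF' t ht).liminf_right_slope_le hr) le_rfl
    (fun t ht => (hbound t ht).trans_eq (add_zero _).symm) b ⟨hab, le_rfl⟩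
  rwa [gronwallBound_ε0, mul_comm] at this

theorem wellPosedness_energy_bound_general
    (m : ℕ) (T : ℝ) (hT : 0 < T)
    (E : Set (Fin 3 → ℝ)) (hE : E = Set.Icc (fun _ => (-1 : ℝ)) (fun _ => (1 : ℝ)))
    (J : (Fin 3 → ℝ) × ℝ → ℝ) (hJ : ContDiff ℝ 1 J)
    (v : Fin 3 → ((Fin 3 → ℝ) × ℝ → ℝ)) (hv : ∀ i, ContDiff ℝ 1 (v i))
    (At : Fin 3 → ((Fin 3 → ℝ) × ℝ → Matrix (Fin m) (Fin m) ℝ))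
    (hAt : ∀ i a b, ContDiff ℝ 1 (fun x => At i x a b))
    (hAtsymm : ∀ i, ∀ p ∈ E ×ˢ Set.Icc (0 : ℝ) T, (At i p).IsSymm)
    (q : (Fin 3 → ℝ) × ℝ → (Fin m → ℝ)) (hq : ContDiff ℝ 1 q)
    (𝒜 : Fin 3 → ((Fin 3 → ℝ) × ℝ → Matrix (Fin m) (Fin m) ℝ))
    (h𝒜 : ∀ i x, 𝒜 i x = At i x - v i x • (1 : Matrix (Fin m) (Fin m) ℝ))
    (hGCL : ∀ p ∈ E ×ˢ Set.Icc (0 : ℝ) T,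
      fderiv ℝ J p (0, 1) = ∑ i : Fin 3, fderiv ℝ (v i) p (Pi.single i 1, 0))
    (hPDE : ∀ p ∈ E ×ˢ Set.Icc (0 : ℝ) T,
      fderiv ℝ (fun x => J x • q x) p (0, 1)
        + ∑ i : Fin 3, fderiv ℝ (fun x => 𝒜 i x *ᵥ q x) p (Pi.single i 1, 0) = 0)
    -- (b) operator-norm bound on the divergence of the contravariant coefficient matrices
    (γ : ℝ)
    (DA : (Fin 3 → ℝ) × ℝ → Matrix (Fin m) (Fin m) ℝ)
    (hDA : ∀ p a b, DA p a b
      = ∑ i : Fin 3, fderiv ℝ (fun x => At i x a b) p (Pi.single i 1, 0))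
    (hopnorm : ∀ p ∈ E ×ˢ Set.Icc (0 : ℝ) T,
      ‖Matrix.toEuclideanCLM (𝕜 := ℝ) (DA p)‖ ≤ 2 * γ * J p)
    -- (c) nonnegative outward boundary flux
    (hbc : ∀ i : Fin 3, ∀ τ ∈ Set.Icc (0 : ℝ) T, ∀ ξ ∈ E,
      (ξ i = 1 → 0 ≤ q (ξ, τ) ⬝ᵥ (𝒜 i (ξ, τ) *ᵥ q (ξ, τ)))
        ∧ (ξ i = -1 → q (ξ, τ) ⬝ᵥ (𝒜 i (ξ, τ) *ᵥ q (ξ, τ)) ≤ 0)) :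
    ∫ ξ in E, J (ξ, T) * (q (ξ, T) ⬝ᵥ q (ξ, T))
      ≤ Real.exp (2 * γ * T) * ∫ ξ in E, J (ξ, 0) * (q (ξ, 0) ⬝ᵥ q (ξ, 0)) := by
  have h𝒜_eq : 𝒜 = fun i x => At i x - v i x • 1 := funext fun i => funext (h𝒜 i)
  have h𝒜_entry i a b : ContDiff ℝ 1 fun x => 𝒜 i x a b := by
    simpa [h𝒜, one_apply] using
      (hAt i a b).sub ((hv i).mul (contDiff_const (c := (1 : Matrix (Fin m) (Fin m) ℝ) a b)))
  have henergy : ContDiff ℝ 1 fun x => J x * (q x ⬝ᵥ q x) := hJ.mul (hq.dotProduct hq)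
  have hrate : ∀ τ ∈ Set.Ico 0 T,
      ∫ ξ in E, fderiv ℝ (fun x => J x * (q x ⬝ᵥ q x)) (ξ, τ) (0, 1)
        ≤ 2 * γ * ∫ ξ in E, J (ξ, τ) * (q (ξ, τ) ⬝ᵥ q (ξ, τ)) := by
    intro τ hτ
    subst hE
    have hτ' := Set.Ico_subset_Icc_self hτ
    refine setIntegral_fderiv_le_mul_of_flux_nonneg (fun _ => by norm_num) henergy
      (fun i => hq.dotProduct (ContDiff.mulVec (h𝒜_entry i) hq)) (fun ξ hξ => ?_)
      (fun i ξ hξ => hbc i τ hτ' ξ hξ)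
    have hp : (ξ, τ) ∈ Set.Icc _ _ ×ˢ Set.Icc 0 T := ⟨hξ, hτ'⟩
    exact fderiv_energy_density_le (hJ.differentiable one_ne_zero _)
      (fun i => (hv i).differentiable one_ne_zero _)
      (fun i a b => (hAt i a b).differentiable one_ne_zero _) (hq.differentiable one_ne_zero _)
      h𝒜_eq (fun i => hAtsymm i _ hp) (hGCL _ hp) (hPDE _ hp)
      (by ext a b; simp [hDA, matrixFDeriv, Matrix.sum_apply]) (hopnorm _ hp)
  have hderiv τ := hasDerivAt_setIntegral_of_contDiff (μ := volume) (hE ▸ isCompact_Icc) henergy τ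
  simpa using le_exp_mul_of_deriv_le_mul hT.le
    (fun τ _ => (hderiv τ).continuousAt.continuousWithinAt)
    (fun τ _ => (hderiv τ).hasDerivWithinAt) hrate

/-- **Well-posedness energy bound.** On `E = [−1,1]³` and `[0,T]`, with
`𝒜 i = Ã i − v i • Id` (symmetric `Ã i`), the GCL, and the conservative form of
the mapped system in force, if moreover (a) `J > 0` on `E × [0,T]`, (b) the
operator norm of `Σ i ∂Ã i/∂ξ i` is bounded by `2γJ` pointwise, and (c) the
outward boundary flux is nonnegative (`qᵀ𝒜 i q ≥ 0` on the face `ξ i = 1`,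
`≤ 0` on the face `ξ i = −1`), then the weighted energy satisfies
`∫_E J(·,T)‖q(·,T)‖² ≤ e^{2γT} ∫_E J(·,0)‖q(·,0)‖²`. -/
theorem wellPosedness_energy_bound
    (m : ℕ) (hm : 1 ≤ m) (T : ℝ) (hT : 0 < T)
    (E : Set (Fin 3 → ℝ)) (hE : E = Set.Icc (fun _ => (-1 : ℝ)) (fun _ => (1 : ℝ)))
    (J : (Fin 3 → ℝ) × ℝ → ℝ) (hJ : ContDiff ℝ 1 J)
    (v : Fin 3 → ((Fin 3 → ℝ) × ℝ → ℝ)) (hv : ∀ i, ContDiff ℝ 1 (v i))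
    (At : Fin 3 → ((Fin 3 → ℝ) × ℝ → Matrix (Fin m) (Fin m) ℝ))
    (hAt : ∀ i a b, ContDiff ℝ 1 (fun x => At i x a b))
    (hAtsymm : ∀ i, ∀ p ∈ E ×ˢ Set.Icc (0 : ℝ) T, (At i p).IsSymm)
    (q : (Fin 3 → ℝ) × ℝ → (Fin m → ℝ)) (hq : ContDiff ℝ 1 q)
    (𝒜 : Fin 3 → ((Fin 3 → ℝ) × ℝ → Matrix (Fin m) (Fin m) ℝ))
    (h𝒜 : ∀ i x, 𝒜 i x = At i x - v i x • (1 : Matrix (Fin m) (Fin m) ℝ))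
    (hGCL : ∀ p ∈ E ×ˢ Set.Icc (0 : ℝ) T,
      fderiv ℝ J p (0, 1) = ∑ i : Fin 3, fderiv ℝ (v i) p (Pi.single i 1, 0))
    (hPDE : ∀ p ∈ E ×ˢ Set.Icc (0 : ℝ) T,
      fderiv ℝ (fun x => J x • q x) p (0, 1)
        + ∑ i : Fin 3, fderiv ℝ (fun x => 𝒜 i x *ᵥ q x) p (Pi.single i 1, 0) = 0)
    -- (a) positivity of the Jacobian
    (hJpos : ∀ p ∈ E ×ˢ Set.Icc (0 : ℝ) T, 0 < J p)
    -- (b) operator-norm bound on the divergence of the contravariant coefficient matrices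
    (γ : ℝ) (hγ : 0 ≤ γ)
    (DA : (Fin 3 → ℝ) × ℝ → Matrix (Fin m) (Fin m) ℝ)
    (hDA : ∀ p a b, DA p a b
      = ∑ i : Fin 3, fderiv ℝ (fun x => At i x a b) p (Pi.single i 1, 0))
    (hopnorm : ∀ p ∈ E ×ˢ Set.Icc (0 : ℝ) T,
      ‖Matrix.toEuclideanCLM (𝕜 := ℝ) (DA p)‖ ≤ 2 * γ * J p)
    -- (c) nonnegative outward boundary flux
    (hbc : ∀ i : Fin 3, ∀ τ ∈ Set.Icc (0 : ℝ) T, ∀ ξ ∈ E,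
      (ξ i = 1 → 0 ≤ q (ξ, τ) ⬝ᵥ (𝒜 i (ξ, τ) *ᵥ q (ξ, τ)))
        ∧ (ξ i = -1 → q (ξ, τ) ⬝ᵥ (𝒜 i (ξ, τ) *ᵥ q (ξ, τ)) ≤ 0)) :
    ∫ ξ in E, J (ξ, T) * (q (ξ, T) ⬝ᵥ q (ξ, T))
      ≤ Real.exp (2 * γ * T) * ∫ ξ in E, J (ξ, 0) * (q (ξ, 0) ⬝ᵥ q (ξ, 0)) :=
  wellPosedness_energy_bound_general m T hT E hE J hJ v hv At hAt hAtsymm q hq 𝒜 h𝒜 hGCL hPDE γ DA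
    hDA hopnorm hbc
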